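/- arXiv:1509.06014 — 9 statements merged into one kernel-verified Lean document; each statement's English description precedes it below -/
import Mathlib

section
/- Let (X,d) be a metric space, let α be a partial action of ℤ on X with every α_n uniformly continuous, and let K ⊆ X be a compact subset. Then for every ε > 0 and every n ∈ ℕ there exist a finite (n,ε)-spanning subset of K and a finite (n,ε)-cover of K. -/
open Filter Topology Set

/-- A partial action of the group `ℤ` on a topological space `X`:
open domains `dom n` with `dom 0 = X`, homeomorphisms `act n : dom (-n) → dom n`
(here encoded as globally defined maps, continuous on their domains), satisfying
`α_n(X_{-n} ∩ X_m) = X_n ∩ X_{n+m}` and `α_n ∘ α_m = α_{n+m}` on `X_{-m} ∩ X_{-m-n}`. -/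
structure PartialZAction (X : Type*) [TopologicalSpace X] where
  dom : ℤ → Set X
  act : ℤ → X → X
  isOpen_dom : ∀ n : ℤ, IsOpen (dom n)
  dom_zero : dom 0 = Set.univ
  act_zero : ∀ x : X, act 0 x = x
  image_inter : ∀ n m : ℤ, act n '' (dom (-n) ∩ dom m) = dom n ∩ dom (n + m)
  act_act : ∀ (n m : ℤ) (x : X), x ∈ dom (-m) → x ∈ dom (-m - n) →
    act n (act m x) = act (n + m) x
  continuousOn : ∀ n : ℤ, ContinuousOn (act n) (dom (-n))

variable {X : Type*} [TopologicalSpace X]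

/-- `I_n(x) = {i ∈ {0,…,n-1} : x ∈ X_{-i}}`. -/
def Iset (α : PartialZAction X) (n : ℕ) (x : X) : Set ℕ :=
  {i : ℕ | i < n ∧ x ∈ α.dom (-(i : ℤ))}

/-- `d_n(x,y) = max_{i ∈ I_n(x) ∩ I_n(y)} ρ(α_i(x), α_i(y))`. -/
noncomputable def dynDist (ρ : X → X → ℝ) (α : PartialZAction X) (n : ℕ) (x y : X) : ℝ :=
  sSup ((fun i : ℕ => ρ (α.act i x) (α.act i y)) '' (Iset α n x ∩ Iset α n y))

/-- `A` is `(n,ε)`-separated. -/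
def IsPSeparated (ρ : X → X → ℝ) (α : PartialZAction X) (n : ℕ) (ε : ℝ) (A : Set X) : Prop :=
  ∀ x ∈ A, ∀ y ∈ A, x ≠ y → ε ≤ dynDist ρ α n x y

/-- `B` is `(n,ε)`-spanning for `K`. -/
def IsPSpanning (ρ : X → X → ℝ) (α : PartialZAction X) (n : ℕ) (ε : ℝ) (K B : Set X) : Prop :=
  ∀ x ∈ K, ∃ y ∈ B, Iset α n x = Iset α n y ∧ dynDist ρ α n x y < ε

/-- `𝒰` is an open `(n,ε)`-cover of `K`. -/
def IsPCover (ρ : X → X → ℝ) (α : PartialZAction X) (n : ℕ) (ε : ℝ) (K : Set X)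
    (𝒰 : Set (Set X)) : Prop :=
  (∀ U ∈ 𝒰, IsOpen U) ∧ K ⊆ ⋃₀ 𝒰 ∧ ∀ U ∈ 𝒰, ∀ x ∈ U, ∀ y ∈ U, dynDist ρ α n x y < ε

/-- `sep(n,ε,α,K)`: maximal cardinality of an `(n,ε)`-separated subset of `K`. -/
noncomputable def sepCount (ρ : X → X → ℝ) (α : PartialZAction X) (n : ℕ) (ε : ℝ)
    (K : Set X) : ℕ :=
  sSup {m : ℕ | ∃ A : Finset X, ↑A ⊆ K ∧ IsPSeparated ρ α n ε ↑A ∧ A.card = m}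

/-- `span(n,ε,α,K)`: minimal cardinality of an `(n,ε)`-spanning subset of `K`. -/
noncomputable def spanCount (ρ : X → X → ℝ) (α : PartialZAction X) (n : ℕ) (ε : ℝ)
    (K : Set X) : ℕ :=
  sInf {m : ℕ | ∃ B : Finset X, ↑B ⊆ K ∧ IsPSpanning ρ α n ε K ↑B ∧ B.card = m}

/-- `cov(n,ε,α,K)`: minimal cardinality of a finite `(n,ε)`-cover of `K`. -/
noncomputable def covCount (ρ : X → X → ℝ) (α : PartialZAction X) (n : ℕ) (ε : ℝ)
    (K : Set X) : ℕ :=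
  sInf {m : ℕ | ∃ 𝒰 : Finset (Set X), IsPCover ρ α n ε K ↑𝒰 ∧ 𝒰.card = m}

/-- `h_ε(α,K) = limsup_n (1/n) log sep(n,ε,α,K)`. -/
noncomputable def entSep (ρ : X → X → ℝ) (α : PartialZAction X) (K : Set X) (ε : ℝ) : EReal :=
  Filter.limsup (fun n : ℕ => ((Real.log (sepCount ρ α n ε K) / n : ℝ) : EReal)) Filter.atTop

/-- The partial topological entropy `ℏ_ρ(α) = sup_{K compact} lim_{ε→0} h_ε(α,K)`
(the limit as `ε → 0` is the supremum over `ε > 0` by monotonicity). -/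
noncomputable def pEntropy (ρ : X → X → ℝ) (α : PartialZAction X) : EReal :=
  ⨆ (K : Set X) (_ : IsCompact K), ⨆ (ε : ℝ) (_ : 0 < ε), entSep ρ α K ε

/-- there exist a finite `(n,ε)`-spanning subset of `K` and a finite
`(n,ε)`-cover of `K`. -/
theorem stmt1 {X : Type*} [MetricSpace X] (α : PartialZAction X)
    (hUC : ∀ (k : ℤ) (ε : ℝ), 0 < ε → ∃ δ > 0, ∀ x ∈ α.dom (-k), ∀ y ∈ α.dom (-k),
      dist x y < δ → dist (α.act k x) (α.act k y) < ε)
    (K : Set X) (hK : IsCompact K) (ε : ℝ) (hε : 0 < ε) (n : ℕ) :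
    (∃ B : Finset X, ↑B ⊆ K ∧ IsPSpanning dist α n ε K ↑B) ∧
      (∃ 𝒰 : Finset (Set X), IsPCover dist α n ε K ↑𝒰) := by
  classical
  have hδex : ∃ δ > 0, ∀ i : ℕ, i < n → ∀ x ∈ α.dom (-(i:ℤ)), ∀ y ∈ α.dom (-(i:ℤ)),
      dist x y < δ → dist (α.act i x) (α.act i y) < ε/2 := by
    induction n with
    | zero => exact ⟨1, one_pos, fun i hi => absurd hi (by omega)⟩
    | succ m ih =>
      obtain ⟨δ₁, hδ₁, h1⟩ := ih
      obtain ⟨δ₂, hδ₂, h2⟩ := hUC m (ε/2) (by linarith)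
      refine ⟨min δ₁ δ₂, lt_min hδ₁ hδ₂, ?_⟩
      intro i hi x hx y hy hxy
      rcases lt_or_eq_of_le (Nat.lt_succ_iff.mp hi) with h | h
      · exact h1 i h x hx y hy (hxy.trans_le (min_le_left _ _))
      · subst h; exact h2 x hx y hy (hxy.trans_le (min_le_right _ _))
  obtain ⟨δ, hδ, hδn⟩ := hδex
  have key : ∀ x y : X, dist x y < δ → dynDist dist α n x y < ε := by
    intro x y hxy
    have hle : dynDist dist α n x y ≤ ε/2 := by
      apply Real.sSup_le
      · rintro v ⟨i, ⟨⟨hin, hxd⟩, ⟨_, hyd⟩⟩, rfl⟩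
        exact le_of_lt (hδn i hin x hxd y hyd hxy)
      · linarith
    linarith
  obtain ⟨t, htK, htcov⟩ := hK.elim_nhds_subcover (fun x => Metric.ball x (δ/2))
    (fun x _ => Metric.ball_mem_nhds x (by linarith))
  constructor
  · set g : X × Finset ℕ → X := fun p =>
      if h : ∃ z, z ∈ K ∧ z ∈ Metric.ball p.1 (δ/2) ∧ Iset α n z = ↑p.2 then h.choose
      else p.1 with hg
    refine ⟨(t ×ˢ (Finset.range n).powerset).image g, ?_, ?_⟩
    · intro z hz
      simp only [Finset.coe_image, Set.mem_image, Finset.mem_coe,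
        Finset.mem_product] at hz
      obtain ⟨p, hp, rfl⟩ := hz
      by_cases h : ∃ z, z ∈ K ∧ z ∈ Metric.ball p.1 (δ/2) ∧ Iset α n z = ↑p.2
      · simp only [hg, dif_pos h]; exact h.choose_spec.1
      · simp only [hg, dif_neg h]; exact htK p.1 hp.1
    · intro x hx
      obtain ⟨c, hc, hxc⟩ := Set.mem_iUnion₂.mp (htcov hx)
      set S : Finset ℕ := (Finset.range n).filter (fun i => x ∈ α.dom (-(i:ℤ))) with hSdef
      have hS : (↑S : Set ℕ) = Iset α n x := by
        ext i
        simp [hSdef, Iset]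
      have hex : ∃ z, z ∈ K ∧ z ∈ Metric.ball c (δ/2) ∧ Iset α n z = ↑S :=
        ⟨x, hx, hxc, hS.symm ▸ rfl⟩
      have hgz : g (c, S) = hex.choose := by simp only [hg]; rw [dif_pos hex]
      obtain ⟨hzK, hzball, hzI⟩ := hex.choose_spec
      refine ⟨g (c, S), ?_, ?_, ?_⟩
      · simp only [Finset.coe_image, Set.mem_image, Finset.mem_coe, Finset.mem_product]
        exact ⟨(c, S), ⟨hc, Finset.mem_powerset.mpr (Finset.filter_subset _ _)⟩, rfl⟩
      · rw [hgz, hzI, hS]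
      · rw [hgz]
        apply key
        have h1 : dist x c < δ/2 := Metric.mem_ball.mp hxc
        have h2 : dist hex.choose c < δ/2 := Metric.mem_ball.mp hzball
        calc dist x hex.choose ≤ dist x c + dist c hex.choose := dist_triangle _ _ _
          _ < δ/2 + δ/2 := by rw [dist_comm c]; linarith
          _ = δ := by ring
  · refine ⟨t.image (fun c => Metric.ball c (δ/2)), ?_, ?_, ?_⟩
    · intro U hU
      simp only [Finset.coe_image, Set.mem_image, Finset.mem_coe] at hU
      obtain ⟨c, _, rfl⟩ := hU
      exact Metric.isOpen_ball
    · intro x hx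
      obtain ⟨c, hc, hxc⟩ := Set.mem_iUnion₂.mp (htcov hx)
      refine ⟨Metric.ball c (δ/2), ?_, hxc⟩
      simp only [Finset.coe_image, Set.mem_image, Finset.mem_coe]
      exact ⟨c, hc, rfl⟩
    · intro U hU x hx y hy
      simp only [Finset.coe_image, Set.mem_image, Finset.mem_coe] at hU
      obtain ⟨c, _, rfl⟩ := hU
      apply key
      have h1 : dist x c < δ/2 := Metric.mem_ball.mp hx
      have h2 : dist y c < δ/2 := Metric.mem_ball.mp hy
      calc dist x y ≤ dist x c + dist c y := dist_triangle _ _ _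
        _ < δ/2 + δ/2 := by rw [dist_comm c]; linarith
        _ = δ := by ring
end

section
/- Let X be a set carrying two uniformly equivalent metrics d and d' (i.e. the identity maps (X,d)→(X,d') and (X,d')→(X,d) are uniformly continuous), and let α be a partial action of ℤ on X (with the common topology) whose maps α_n are uniformly continuous. Then ℏ_d(α) = ℏ_{d'}(α). -/
open Filter Topology Set

variable {X : Type*} [TopologicalSpace X]

namespace Stmt3Aux

variable {X : Type*} [MetricSpace X]

lemma img_finite (σ : X → X → ℝ) (α : PartialZAction X) (n : ℕ) (x y : X) :
    ((fun i : ℕ => σ (α.act i x) (α.act i y)) '' (Iset α n x ∩ Iset α n y)).Finite :=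
  ((Set.finite_Iio n).subset fun _ hi => hi.1.1).image _

lemma le_dyn {σ : X → X → ℝ} {α : PartialZAction X} {n : ℕ} {x y : X} {i : ℕ}
    (hi : i ∈ Iset α n x ∩ Iset α n y) :
    σ (α.act i x) (α.act i y) ≤ dynDist σ α n x y :=
  le_csSup (img_finite σ α n x y).bddAbove (Set.mem_image_of_mem _ hi)

lemma exists_of_le_dyn {σ : X → X → ℝ} {α : PartialZAction X} {n : ℕ} {x y : X} {c : ℝ}
    (hc : 0 < c) (h : c ≤ dynDist σ α n x y) :
    ∃ i ∈ Iset α n x ∩ Iset α n y, c ≤ σ (α.act i x) (α.act i y) := by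
  rcases Set.eq_empty_or_nonempty (Iset α n x ∩ Iset α n y) with he | hne
  · exfalso
    unfold dynDist at h
    rw [he, Set.image_empty, Real.sSup_empty] at h
    linarith
  · obtain ⟨i, hi, hEq⟩ := (hne.image _).csSup_mem (img_finite σ α n x y)
    refine ⟨i, hi, ?_⟩
    unfold dynDist at h
    rw [← hEq] at h
    exact h

lemma dyn_lt {σ : X → X → ℝ} {α : PartialZAction X} {n : ℕ} {x y : X} {c : ℝ}
    (hc : 0 < c) (h : ∀ i ∈ Iset α n x ∩ Iset α n y, σ (α.act i x) (α.act i y) < c) :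
    dynDist σ α n x y < c := by
  rcases Set.eq_empty_or_nonempty (Iset α n x ∩ Iset α n y) with he | hne
  · unfold dynDist
    rw [he, Set.image_empty, Real.sSup_empty]
    exact hc
  · obtain ⟨i, hi, hEq⟩ := (hne.image _).csSup_mem (img_finite σ α n x y)
    unfold dynDist
    rw [← hEq]
    exact h i hi

lemma sep_imp {σ τ : X → X → ℝ} {ε δ : ℝ} (hε : 0 < ε)
    (himp : ∀ a b : X, σ a b < δ → τ a b < ε) {α : PartialZAction X} {n : ℕ} {A : Set X}
    (h : IsPSeparated τ α n ε A) : IsPSeparated σ α n δ A := by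
  intro x hx y hy hxy
  obtain ⟨i, hi, hge⟩ := exists_of_le_dyn hε (h x hx y hy hxy)
  have hδσ : δ ≤ σ (α.act i x) (α.act i y) := by
    by_contra hlt
    push_neg at hlt
    exact absurd (himp _ _ hlt) (not_lt.2 hge)
  exact hδσ.trans (le_dyn hi)

lemma card_bound {K : Set X} (hK : IsCompact K) {δ : ℝ} (hδ : 0 < δ) :
    ∃ N : ℕ, ∀ A : Finset X, ↑A ⊆ K →
      (∀ x ∈ A, ∀ y ∈ A, x ≠ y → δ ≤ dist x y) → A.card ≤ N := by
  classical
  obtain ⟨t, -, htf, hcov⟩ := hK.finite_cover_balls (half_pos hδ)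
  refine ⟨htf.toFinset.card, fun A hA hsep => ?_⟩
  have hmap : ∀ a : X, ∃ c : X, a ∈ K → c ∈ htf.toFinset ∧ a ∈ Metric.ball c (δ / 2) := by
    intro a
    by_cases ha : a ∈ K
    · have := hcov ha
      simp only [Set.mem_iUnion] at this
      obtain ⟨c, hc, hb⟩ := this
      exact ⟨c, fun _ => ⟨htf.mem_toFinset.2 hc, hb⟩⟩
    · exact ⟨a, fun h => absurd h ha⟩
  choose f hf using hmap
  refine Finset.card_le_card_of_injOn f (fun a ha => (hf a (hA ha)).1) ?_
  intro a ha b hb hfab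
  by_contra hab
  have h1 := (hf a (hA ha)).2
  have h2 := (hf b (hA hb)).2
  rw [Metric.mem_ball] at h1 h2
  have : dist a b < δ := by
    calc dist a b ≤ dist a (f a) + dist (f b) b := by
          rw [hfab]; exact dist_triangle _ _ _
    _ < δ / 2 + δ / 2 := by rw [dist_comm (f b) b]; exact add_lt_add h1 h2
    _ = δ := by ring
  exact absurd (hsep a (Finset.mem_coe.1 ha) b (Finset.mem_coe.1 hb) hab) (not_le.2 this)

lemma unif_dyn (σ : X → X → ℝ) (α : PartialZAction X)
    (hUC : ∀ (k : ℤ) (ε : ℝ), 0 < ε → ∃ δ > 0, ∀ x ∈ α.dom (-k), ∀ y ∈ α.dom (-k),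
      dist x y < δ → dist (α.act k x) (α.act k y) < ε)
    (hσ : ∀ c : ℝ, 0 < c → ∃ η > 0, ∀ a b : X, dist a b < η → σ a b < c)
    {c : ℝ} (hc : 0 < c) (n : ℕ) :
    ∃ η > 0, ∀ y z : X, dist y z < η →
      ∀ i ∈ Iset α n y ∩ Iset α n z, σ (α.act i y) (α.act i z) < c := by
  induction n with
  | zero => exact ⟨1, one_pos, fun y z _ i hi => absurd hi.1.1 (Nat.not_lt_zero i)⟩
  | succ n ih =>
    obtain ⟨η₀, hη₀, h₀⟩ := ih
    obtain ⟨c₁, hc₁, h₁⟩ := hσ c hc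
    obtain ⟨d, hd, hdc⟩ := hUC n c₁ hc₁
    refine ⟨min η₀ d, lt_min hη₀ hd, fun y z hyz i hi => ?_⟩
    rcases Nat.lt_succ_iff_lt_or_eq.1 hi.1.1 with hlt | heq
    · exact h₀ y z (hyz.trans_le (min_le_left _ _)) i ⟨⟨hlt, hi.1.2⟩, ⟨hlt, hi.2.2⟩⟩
    · subst heq
      exact h₁ _ _ (hdc y hi.1.2 z hi.2.2 (hyz.trans_le (min_le_right _ _)))

lemma bdd_sep (σ : X → X → ℝ) (α : PartialZAction X)
    (hUC : ∀ (k : ℤ) (ε : ℝ), 0 < ε → ∃ δ > 0, ∀ x ∈ α.dom (-k), ∀ y ∈ α.dom (-k),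
      dist x y < δ → dist (α.act k x) (α.act k y) < ε)
    (hσ : ∀ c : ℝ, 0 < c → ∃ η > 0, ∀ a b : X, dist a b < η → σ a b < c)
    {K : Set X} (hK : IsCompact K) {δ : ℝ} (hδ : 0 < δ) (n : ℕ) :
    BddAbove {m : ℕ | ∃ A : Finset X, ↑A ⊆ K ∧ IsPSeparated σ α n δ ↑A ∧ A.card = m} := by
  obtain ⟨η, hη, hctrl⟩ := unif_dyn σ α hUC hσ hδ n
  obtain ⟨N, hN⟩ := card_bound hK hη
  refine ⟨N, fun m hm => ?_⟩
  obtain ⟨A, hA, hsep, hcard⟩ := hm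
  subst hcard
  refine hN A hA fun x hx y hy hxy => ?_
  by_contra hlt
  push_neg at hlt
  have hdl : dynDist σ α n x y < δ := dyn_lt hδ (hctrl x y hlt)
  exact absurd (hsep x (Finset.mem_coe.2 hx) y (Finset.mem_coe.2 hy) hxy) (not_le.2 hdl)

lemma sepCount_le (σ τ : X → X → ℝ) (α : PartialZAction X)
    (hUC : ∀ (k : ℤ) (ε : ℝ), 0 < ε → ∃ δ > 0, ∀ x ∈ α.dom (-k), ∀ y ∈ α.dom (-k),
      dist x y < δ → dist (α.act k x) (α.act k y) < ε)
    (hσ : ∀ c : ℝ, 0 < c → ∃ η > 0, ∀ a b : X, dist a b < η → σ a b < c)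
    {K : Set X} (hK : IsCompact K) {ε δ : ℝ} (hε : 0 < ε) (hδ : 0 < δ)
    (himp : ∀ a b : X, σ a b < δ → τ a b < ε) (n : ℕ) :
    sepCount τ α n ε K ≤ sepCount σ α n δ K := by
  refine csSup_le_csSup (bdd_sep σ α hUC hσ hK hδ n) ?_ ?_
  · refine ⟨0, ∅, by simp, ?_, rfl⟩
    intro x hx
    simp at hx
  · rintro m ⟨A, h1, h2, h3⟩
    exact ⟨A, h1, sep_imp hε himp h2, h3⟩

lemma entSep_le (σ τ : X → X → ℝ) (α : PartialZAction X)
    (hUC : ∀ (k : ℤ) (ε : ℝ), 0 < ε → ∃ δ > 0, ∀ x ∈ α.dom (-k), ∀ y ∈ α.dom (-k),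
      dist x y < δ → dist (α.act k x) (α.act k y) < ε)
    (hσ : ∀ c : ℝ, 0 < c → ∃ η > 0, ∀ a b : X, dist a b < η → σ a b < c)
    {K : Set X} (hK : IsCompact K) {ε δ : ℝ} (hε : 0 < ε) (hδ : 0 < δ)
    (himp : ∀ a b : X, σ a b < δ → τ a b < ε) :
    entSep τ α K ε ≤ entSep σ α K δ := by
  refine Filter.limsup_le_limsup (Filter.Eventually.of_forall fun n => ?_)
  have h := sepCount_le σ τ α hUC hσ hK hε hδ himp n
  have hlog : Real.log (sepCount τ α n ε K) ≤ Real.log (sepCount σ α n δ K) := by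
    rcases Nat.eq_zero_or_pos (sepCount τ α n ε K) with h0 | hpos
    · rw [h0]
      simpa using Real.log_natCast_nonneg _
    · exact Real.log_le_log (by exact_mod_cast hpos) (by exact_mod_cast h)
  have hdiv : Real.log (sepCount τ α n ε K) / n ≤ Real.log (sepCount σ α n δ K) / n := by
    apply div_le_div_of_nonneg_right hlog
    exact Nat.cast_nonneg n
  exact EReal.coe_le_coe_iff.2 hdiv

lemma pEnt_le (σ τ : X → X → ℝ) (α : PartialZAction X)
    (hUC : ∀ (k : ℤ) (ε : ℝ), 0 < ε → ∃ δ > 0, ∀ x ∈ α.dom (-k), ∀ y ∈ α.dom (-k),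
      dist x y < δ → dist (α.act k x) (α.act k y) < ε)
    (hστ : ∀ ε : ℝ, 0 < ε → ∃ δ > 0, ∀ a b : X, σ a b < δ → τ a b < ε)
    (hσ : ∀ c : ℝ, 0 < c → ∃ η > 0, ∀ a b : X, dist a b < η → σ a b < c) :
    pEntropy τ α ≤ pEntropy σ α := by
  refine iSup₂_le fun K hK => iSup₂_le fun ε hε => ?_
  obtain ⟨δ, hδ, himp⟩ := hστ ε hε
  exact le_iSup₂_of_le K hK (le_iSup₂_of_le δ hδ
    (entSep_le σ τ α hUC hσ hK hε hδ himp))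

end Stmt3Aux

/-- the partial entropy is the same for uniformly equivalent metrics.
Here `dist` is the metric `d` and `ρ` is a second metric `d'` on `X`, uniformly
equivalent to `d` (hence generating the same topology). -/
theorem stmt3 {X : Type*} [MetricSpace X] (ρ : X → X → ℝ)
    (hρ_nonneg : ∀ x y : X, 0 ≤ ρ x y)
    (hρ_symm : ∀ x y : X, ρ x y = ρ y x)
    (hρ_triangle : ∀ x y z : X, ρ x z ≤ ρ x y + ρ y z)
    (hρ_eq_zero : ∀ x y : X, ρ x y = 0 ↔ x = y)
    (hequiv₁ : ∀ ε : ℝ, 0 < ε → ∃ δ > 0, ∀ x y : X, dist x y < δ → ρ x y < ε)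
    (hequiv₂ : ∀ ε : ℝ, 0 < ε → ∃ δ > 0, ∀ x y : X, ρ x y < δ → dist x y < ε)
    (α : PartialZAction X)
    (hUC : ∀ (k : ℤ) (ε : ℝ), 0 < ε → ∃ δ > 0, ∀ x ∈ α.dom (-k), ∀ y ∈ α.dom (-k),
      dist x y < δ → dist (α.act k x) (α.act k y) < ε) :
    pEntropy dist α = pEntropy ρ α := by
  apply le_antisymm
  · exact Stmt3Aux.pEnt_le ρ dist α hUC hequiv₂ hequiv₁
  · exact Stmt3Aux.pEnt_le dist ρ α hUC hequiv₁
      (fun c hc => ⟨c, hc, fun a b h => h⟩)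
end

section
/- Let α and β be partial actions of ℤ on compact metric spaces X and Y respectively, and suppose α and β are equivalent, i.e. there is a homeomorphism h : X → Y with h(X_n) = Y_n for all n ∈ ℤ and h(α_n(x)) = β_n(h(x)) for all n ∈ ℤ and all x ∈ X_{-n}. Then ℏ(α) = ℏ(β), where the partial topological entropies are computed with respect to any metrics generating the topologies of X and Y. -/
open Filter Topology Set

variable {X : Type*} [TopologicalSpace X]

/-
An equivalence `h` maps the domains `X_{-i}` onto the domains `Y_{-i}`, hence preserves the index
sets `I_n`, and it intertwines the actions there. Since `h⁻¹` is uniformly continuous, for every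
`ε > 0` there is `δ > 0` such that `h` maps `(n,ε)`-separated subsets of `K` injectively onto
`(n,δ)`-separated subsets of `h(K)`, for all `n`. Thus `sep(n,ε,α,K) ≤ sep(n,δ,β,h(K))`, whence
`ℏ(α) ≤ ℏ(β)`; the reverse inequality is the same argument for `h⁻¹`.
-/

namespace PartialZAction

variable {Y : Type*} [TopologicalSpace Y]

theorem Iset_finite (α : PartialZAction X) (n : ℕ) (x : X) : (Iset α n x).Finite :=
  (finite_Iio n).subset fun _ hi => hi.1

section dynDist

variable {ρ : X → X → ℝ} {α : PartialZAction X} {n i : ℕ} {x y : X}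

theorem le_dynDist (hi : i ∈ Iset α n x ∩ Iset α n y) :
    ρ (α.act i x) (α.act i y) ≤ dynDist ρ α n x y :=
  le_csSup (((Iset_finite α n x).subset inter_subset_left).image _).bddAbove ⟨i, hi, rfl⟩

theorem dynDist_le {c : ℝ} (hc : 0 ≤ c)
    (h : ∀ i ∈ Iset α n x ∩ Iset α n y, ρ (α.act i x) (α.act i y) ≤ c) :
    dynDist ρ α n x y ≤ c :=
  Real.sSup_le (by rintro _ ⟨i, hi, rfl⟩; exact h i hi) hc

/-- The hypothesis `0 < ε` excludes an empty index set, where `d_n = sSup ∅ = 0`. -/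
theorem exists_le_of_le_dynDist {ε : ℝ} (hε : 0 < ε) (h : ε ≤ dynDist ρ α n x y) :
    ∃ i ∈ Iset α n x ∩ Iset α n y, ε ≤ ρ (α.act i x) (α.act i y) := by
  rw [dynDist] at h
  set S := (fun i : ℕ => ρ (α.act i x) (α.act i y)) '' (Iset α n x ∩ Iset α n y)
  have hS : S.Nonempty := by
    refine nonempty_iff_ne_empty.mpr fun hS => ?_
    rw [hS, Real.sSup_empty] at h
    linarith
  obtain ⟨i, hi, hmax⟩ :=
    hS.csSup_mem (((Iset_finite α n x).subset inter_subset_left).image _)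
  exact ⟨i, hi, h.trans_eq hmax.symm⟩

end dynDist

/-- Separated sets are coded injectively by the nearby points of a finite `ε/3`-net along the
first `n` steps of their orbits. -/
theorem bddAbove_card_of_isPSeparated {M : Type*} [MetricSpace M] [CompactSpace M]
    (α : PartialZAction M) (n : ℕ) {ε : ℝ} (hε : 0 < ε) :
    ∃ C : ℕ, ∀ A : Finset M, IsPSeparated dist α n ε ↑A → A.card ≤ C := by
  classical
  obtain ⟨t, -, htfin, htcov⟩ := finite_cover_balls_of_compact (isCompact_univ (X := M))
    (by positivity : 0 < ε / 3)
  have : Fintype t := htfin.fintype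
  have hnet : ∀ x : M, ∃ c : t, dist x c < ε / 3 := fun x => by
    obtain ⟨c, hc, hxc⟩ := mem_iUnion₂.mp (htcov (mem_univ x))
    exact ⟨⟨c, hc⟩, hxc⟩
  choose near hnear using hnet
  let code : M → Fin n → Option t := fun x i =>
    if x ∈ α.dom (-(i : ℤ)) then some (near (α.act i x)) else none
  refine ⟨Fintype.card (Fin n → Option t), fun A hA => ?_⟩
  have hinj : InjOn code A := by
    intro x hx y hy hxy
    by_contra hne
    have hclose : dynDist dist α n x y ≤ 2 * ε / 3 := by
      refine dynDist_le (by positivity) fun i ⟨⟨hin, hxi⟩, ⟨_, hyi⟩⟩ => ?_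
      have hcode := congrFun hxy ⟨i, hin⟩
      simp only [code, if_pos hxi, if_pos hyi, Option.some_inj] at hcode
      have hx' := hnear (α.act i x)
      have hy' := hnear (α.act i y)
      rw [hcode] at hx'
      linarith [dist_triangle_right (α.act i x) (α.act i y) (near (α.act i y))]
    linarith [hA x hx y hy hne]
  simpa using Finset.card_le_card_of_injOn code (fun a _ => Finset.mem_univ (code a)) hinj

def IsEquivalence (α : PartialZAction X) (β : PartialZAction Y) (h : X ≃ₜ Y) : Prop :=
  (∀ n : ℤ, ⇑h '' α.dom n = β.dom n) ∧
    ∀ n : ℤ, ∀ x ∈ α.dom (-n), h (α.act n x) = β.act n (h x)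

namespace IsEquivalence

variable {α : PartialZAction X} {β : PartialZAction Y} {h : X ≃ₜ Y}

theorem mem_dom_iff (hc : IsEquivalence α β h) (n : ℤ) (x : X) : h x ∈ β.dom n ↔ x ∈ α.dom n := by
  rw [← hc.1 n, h.injective.mem_set_image]

theorem Iset_eq (hc : IsEquivalence α β h) (n : ℕ) (x : X) : Iset β n (h x) = Iset α n x := by
  ext i
  simp only [Iset, mem_ofPred_eq, hc.mem_dom_iff]

theorem symm (hc : IsEquivalence α β h) : IsEquivalence β α h.symm := by
  refine ⟨fun n => ?_, fun n y hy => ?_⟩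
  · rw [← hc.1 n]
    exact h.toEquiv.symm_image_image _
  · rw [← h.apply_symm_apply y, hc.mem_dom_iff] at hy
    rw [← h.symm_apply_apply (α.act n (h.symm y)), hc.2 n _ hy, h.apply_symm_apply]

theorem le_dynDist_apply {ρ : X → X → ℝ} {σ : Y → Y → ℝ} {ε δ : ℝ} (hc : IsEquivalence α β h)
    (hε : 0 < ε) (hρσ : ∀ a b, ε ≤ ρ a b → δ ≤ σ (h a) (h b)) {n : ℕ} {x y : X}
    (hxy : ε ≤ dynDist ρ α n x y) : δ ≤ dynDist σ β n (h x) (h y) := by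
  obtain ⟨i, hi, hεi⟩ := exists_le_of_le_dynDist hε hxy
  have hδi := hρσ _ _ hεi
  rw [hc.2 i x hi.1.2, hc.2 i y hi.2.2] at hδi
  exact hδi.trans (le_dynDist (by rwa [hc.Iset_eq, hc.Iset_eq]))

theorem isPSeparated_image {ρ : X → X → ℝ} {σ : Y → Y → ℝ} {ε δ : ℝ} (hc : IsEquivalence α β h)
    (hε : 0 < ε) (hρσ : ∀ a b, ε ≤ ρ a b → δ ≤ σ (h a) (h b)) {n : ℕ} {A : Set X}
    (hA : IsPSeparated ρ α n ε A) : IsPSeparated σ β n δ (h '' A) := by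
  rintro _ ⟨x, hx, rfl⟩ _ ⟨y, hy, rfl⟩ hne
  exact hc.le_dynDist_apply hε hρσ (hA x hx y hy (ne_of_apply_ne h hne))

end IsEquivalence

theorem entSep_le_entSep {ρ : X → X → ℝ} {σ : Y → Y → ℝ} {α : PartialZAction X}
    {β : PartialZAction Y} {K : Set X} {L : Set Y} {ε δ : ℝ}
    (hcount : ∀ n, sepCount ρ α n ε K ≤ sepCount σ β n δ L) :
    entSep ρ α K ε ≤ entSep σ β L δ := by
  refine limsup_le_limsup (Eventually.of_forall fun n => ?_)
  rw [EReal.coe_le_coe_iff]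
  have hlog : Real.log (sepCount ρ α n ε K) ≤ Real.log (sepCount σ β n δ L) := by
    rcases Nat.eq_zero_or_pos (sepCount ρ α n ε K) with h0 | h0
    · simpa [h0] using Real.log_natCast_nonneg _
    · exact Real.log_le_log (by exact_mod_cast h0) (by exact_mod_cast hcount n)
  exact div_le_div_of_nonneg_right hlog n.cast_nonneg

theorem IsEquivalence.sepCount_le {M N : Type*} [MetricSpace M] [MetricSpace N] [CompactSpace N]
    {α : PartialZAction M} {β : PartialZAction N} {h : M ≃ₜ N} (hc : IsEquivalence α β h)
    {ε δ : ℝ} (hε : 0 < ε) (hδ : 0 < δ) (hsep : ∀ a b, ε ≤ dist a b → δ ≤ dist (h a) (h b))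
    (n : ℕ) (K : Set M) : sepCount dist α n ε K ≤ sepCount dist β n δ (h '' K) := by
  obtain ⟨C, hC⟩ := bddAbove_card_of_isPSeparated β n hδ
  refine csSup_le_csSup' ⟨C, ?_⟩ ?_
  · rintro _ ⟨B, -, hB, rfl⟩
    exact hC B hB
  · rintro _ ⟨A, hAK, hA, rfl⟩
    refine ⟨A.map h.toEquiv.toEmbedding, ?_, ?_, Finset.card_map _⟩
    · rw [Finset.coe_map]
      exact image_mono hAK
    · rw [Finset.coe_map]
      exact hc.isPSeparated_image hε hsep hA

theorem pEntropy_le_of_isEquivalence {M N : Type*} [MetricSpace M] [MetricSpace N]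
    [CompactSpace N] {α : PartialZAction M} {β : PartialZAction N} {h : M ≃ₜ N}
    (hc : IsEquivalence α β h) : pEntropy dist α ≤ pEntropy dist β := by
  refine iSup₂_le fun K hK => iSup₂_le fun ε hε => ?_
  obtain ⟨δ, hδ, hδε⟩ := Metric.uniformContinuous_iff.mp
    (CompactSpace.uniformContinuous_of_continuous h.symm.continuous) ε hε
  have hsep : ∀ a b, ε ≤ dist a b → δ ≤ dist (h a) (h b) := fun a b hab => by
    by_contra! hlt
    simpa using (hδε hlt).trans_le hab
  exact (entSep_le_entSep (hc.sepCount_le hε hδ hsep · K)).trans <|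
    le_iSup₂_of_le (h '' K) (hK.image h.continuous) (le_iSup₂_of_le δ hδ le_rfl)

end PartialZAction

/-- equivalent partial actions on compact metric spaces have the same
partial topological entropy. -/
theorem stmt4 {X Y : Type*} [MetricSpace X] [MetricSpace Y] [CompactSpace X] [CompactSpace Y]
    (α : PartialZAction X) (β : PartialZAction Y) (h : X ≃ₜ Y)
    (hdom : ∀ n : ℤ, ⇑h '' α.dom n = β.dom n)
    (hact : ∀ n : ℤ, ∀ x ∈ α.dom (-n), h (α.act n x) = β.act n (h x)) :
    pEntropy dist α = pEntropy dist β :=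
  have hc : PartialZAction.IsEquivalence α β h := ⟨hdom, hact⟩
  le_antisymm (PartialZAction.pEntropy_le_of_isEquivalence hc)
    (PartialZAction.pEntropy_le_of_isEquivalence hc.symm)
end

section
/- Let X be a compact metric space with metric d and let α be a partial action of ℤ on X. If 𝒰 is a finite open cover of X with Lebesgue number δ > 0, then N(𝒰,n,α) ≤ span(n,δ,α,X) for all n ≥ 1. -/
open Filter Topology Set

variable {X : Type*} [TopologicalSpace X]

/-- The cover `𝒰^n = 𝒰_n ∪ 𝒰^c_n`, where
`𝒰_n = {α_n⁻¹(U ∩ X_n) : U ∈ 𝒰, U ∩ X_n ≠ ∅}` and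
`𝒰^c_n = {U ∈ 𝒰 : U ∩ (X \ X_{-n}) ≠ ∅}`. -/
def coverAt (α : PartialZAction X) (𝒰 : Set (Set X)) (n : ℤ) : Set (Set X) :=
  {V | ∃ U ∈ 𝒰, (U ∩ α.dom n).Nonempty ∧ V = α.dom (-n) ∩ α.act n ⁻¹' (U ∩ α.dom n)} ∪
    {U ∈ 𝒰 | (U ∩ (α.dom (-n))ᶜ).Nonempty}

/-- The common refinement `𝒰^(n) = 𝒰^0 ∨ 𝒰^1 ∨ ⋯ ∨ 𝒰^{n-1}`. -/
def coverJoin (α : PartialZAction X) (𝒰 : Set (Set X)) (n : ℕ) : Set (Set X) :=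
  {W | ∃ f : ℕ → Set X, (∀ i < n, f i ∈ coverAt α 𝒰 (i : ℤ)) ∧ W = ⋂ i ∈ Finset.range n, f i}

/-- `N(𝒰,n,α)`: minimal cardinality of a subcover of `𝒰^(n)`. -/
noncomputable def coverCount (α : PartialZAction X) (𝒰 : Set (Set X)) (n : ℕ) : ℕ :=
  sInf {m : ℕ | ∃ 𝒱 : Finset (Set X), ↑𝒱 ⊆ coverJoin α 𝒰 n ∧
    (Set.univ : Set X) ⊆ ⋃₀ ↑𝒱 ∧ 𝒱.card = m}


open scoped Classical

lemma zero_mem_Iset (α : PartialZAction X) {n : ℕ} (hn : 1 ≤ n) (x : X) :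
    0 ∈ Iset α n x := ⟨hn, by simp [α.dom_zero]⟩

lemma Iset_finite (α : PartialZAction X) (n : ℕ) (x : X) : (Iset α n x).Finite :=
  (Set.finite_Iio n).subset fun _ hi => hi.1

lemma act_mem_dom (α : PartialZAction X) (i : ℤ) {x : X} (hx : x ∈ α.dom (-i)) :
    α.act i x ∈ α.dom i := by
  have h := α.image_inter i 0
  rw [α.dom_zero, add_zero, Set.inter_univ, Set.inter_self] at h
  have hm : α.act i x ∈ α.act i '' α.dom (-i) := ⟨x, hx, rfl⟩
  rwa [h] at hm

lemma dist_le_dynDist {X : Type*} [MetricSpace X] (α : PartialZAction X) (n : ℕ) {x y : X}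
    {i : ℕ} (hx : i ∈ Iset α n x) (hy : i ∈ Iset α n y) :
    dist (α.act i x) (α.act i y) ≤ dynDist dist α n x y := by
  rw [dynDist]
  exact le_csSup (((Iset_finite α n x).inter_of_left _).image _).bddAbove ⟨i, ⟨hx, hy⟩, rfl⟩

/-- Auxiliary map encoding the orbit segment of `x`. -/
noncomputable def auxG (α : PartialZAction X) (n : ℕ) (x : X) : Fin n → X :=
  fun i => if x ∈ α.dom (-((i : ℕ) : ℤ)) then α.act ((i : ℕ) : ℤ) x else x

lemma auxG_mk (α : PartialZAction X) (n : ℕ) (x : X) (i : ℕ) (hi : i < n)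
    (h : x ∈ α.dom (-(i : ℤ))) : auxG α n x ⟨i, hi⟩ = α.act (i : ℤ) x := by
  show (if x ∈ α.dom (-(i : ℤ)) then α.act (i : ℤ) x else x) = α.act (i : ℤ) x
  exact if_pos h

/-- Points whose membership pattern in the domains is `b`. -/
def auxC (α : PartialZAction X) (n : ℕ) (b : Finset (Fin n)) : Set X :=
  {x | ∀ i : Fin n, x ∈ α.dom (-((i : ℕ) : ℤ)) ↔ i ∈ b}

lemma exists_spanning {X : Type*} [MetricSpace X] [CompactSpace X] (α : PartialZAction X)
    {δ : ℝ} (hδ : 0 < δ) {n : ℕ} (hn : 1 ≤ n) :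
    ∃ B : Finset X, IsPSpanning dist α n δ Set.univ ↑B := by
  classical
  have key : ∀ b : Finset (Fin n), ∃ B : Set X, B.Finite ∧ B ⊆ auxC α n b ∧
      ∀ x ∈ auxC α n b, ∃ y ∈ B, dist (auxG α n x) (auxG α n y) < δ := by
    intro b
    have htb : TotallyBounded (auxG α n '' auxC α n b) :=
      isCompact_univ.totallyBounded.subset (Set.subset_univ _)
    obtain ⟨t, hts, htf, htcov⟩ := totallyBounded_iff_subset.1 htb _ (Metric.dist_mem_uniformity hδ)
    choose y hyC hyg using fun c : t => hts c.2
    have : Finite t := htf.to_subtype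
    refine ⟨Set.range y, Set.finite_range _, ?_, ?_⟩
    · rintro _ ⟨c, rfl⟩; exact hyC c
    · intro x hx
      obtain ⟨c, hct, hdc⟩ := Set.mem_iUnion₂.1 (htcov ⟨x, hx, rfl⟩)
      exact ⟨y ⟨c, hct⟩, ⟨⟨c, hct⟩, rfl⟩, by rw [hyg ⟨c, hct⟩]; exact hdc⟩
  choose Bb hBf hBC hBs using key
  have hfin : (⋃ b, Bb b).Finite := Set.finite_iUnion hBf
  refine ⟨hfin.toFinset, ?_⟩
  intro x _
  set b : Finset (Fin n) :=
    Finset.univ.filter (fun i : Fin n => x ∈ α.dom (-((i : ℕ) : ℤ))) with hb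
  have hxC : x ∈ auxC α n b := by
    intro i
    simp [hb, auxC, Finset.mem_filter]
  obtain ⟨y, hyB, hdist⟩ := hBs b x hxC
  have hyC : y ∈ auxC α n b := hBC b hyB
  have hIeq : Iset α n x = Iset α n y := by
    ext i
    simp only [Iset, Set.mem_setOf_eq]
    constructor
    · rintro ⟨hi, hxd⟩
      exact ⟨hi, (hyC ⟨i, hi⟩).2 ((hxC ⟨i, hi⟩).1 hxd)⟩
    · rintro ⟨hi, hyd⟩
      exact ⟨hi, (hxC ⟨i, hi⟩).2 ((hyC ⟨i, hi⟩).1 hyd)⟩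
  refine ⟨y, hfin.mem_toFinset.2 (Set.mem_iUnion.2 ⟨b, hyB⟩), hIeq, ?_⟩
  rw [dynDist]
  have hfinS : ((fun i : ℕ => dist (α.act i x) (α.act i y)) ''
      (Iset α n x ∩ Iset α n y)).Finite :=
    ((Iset_finite α n x).inter_of_left _).image _
  have hneS : ((fun i : ℕ => dist (α.act i x) (α.act i y)) ''
      (Iset α n x ∩ Iset α n y)).Nonempty :=
    ⟨_, ⟨0, ⟨zero_mem_Iset α hn x, zero_mem_Iset α hn y⟩, rfl⟩⟩
  rw [hfinS.csSup_lt_iff hneS]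
  rintro r ⟨i, ⟨hix, hiy⟩, rfl⟩
  have hi : i < n := hix.1
  calc dist (α.act i x) (α.act i y)
      = dist (auxG α n x ⟨i, hi⟩) (auxG α n y ⟨i, hi⟩) := by
        rw [auxG_mk α n x i hi hix.2, auxG_mk α n y i hi hiy.2]
    _ ≤ dist (auxG α n x) (auxG α n y) := dist_le_pi_dist _ _ _
    _ < δ := hdist

/-- The element of `coverAt` associated to a spanning point `y` and time `i`. -/
noncomputable def auxF (α : PartialZAction X) (U : X → Set X) (y : X) (i : ℕ) : Set X :=
  if y ∈ α.dom (-(i : ℤ)) then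
    α.dom (-(i : ℤ)) ∩ α.act (i : ℤ) ⁻¹' (U (α.act (i : ℤ) y) ∩ α.dom (i : ℤ))
  else U y

lemma auxF_pos (α : PartialZAction X) (U : X → Set X) {y : X} {i : ℕ}
    (h : y ∈ α.dom (-(i : ℤ))) :
    auxF α U y i =
      α.dom (-(i : ℤ)) ∩ α.act (i : ℤ) ⁻¹' (U (α.act (i : ℤ) y) ∩ α.dom (i : ℤ)) := if_pos h

lemma auxF_neg (α : PartialZAction X) (U : X → Set X) {y : X} {i : ℕ}
    (h : y ∉ α.dom (-(i : ℤ))) : auxF α U y i = U y := if_neg h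

lemma coverCount_le_card {X : Type*} [MetricSpace X] (α : PartialZAction X)
    (𝒰 : Finset (Set X)) {δ : ℝ} (hδ : 0 < δ)
    (hLeb : ∀ x : X, ∃ U ∈ 𝒰, Metric.ball x δ ⊆ U)
    {n : ℕ} (hn : 1 ≤ n) (B : Finset X)
    (hB : IsPSpanning dist α n δ Set.univ ↑B) :
    coverCount α ↑𝒰 n ≤ B.card := by
  classical
  choose U hU hball using hLeb
  have hWmem : ∀ y : X, (⋂ i ∈ Finset.range n, auxF α U y i) ∈ coverJoin α ↑𝒰 n := by
    intro y
    refine ⟨auxF α U y, fun i _ => ?_, rfl⟩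
    by_cases h : y ∈ α.dom (-(i : ℤ))
    · left
      exact ⟨U (α.act (i : ℤ) y), Finset.mem_coe.2 (hU _),
        ⟨α.act (i : ℤ) y, hball _ (Metric.mem_ball_self hδ), act_mem_dom α i h⟩,
        auxF_pos α U h⟩
    · right
      rw [auxF_neg α U h]
      exact ⟨Finset.mem_coe.2 (hU y), ⟨y, hball y (Metric.mem_ball_self hδ), h⟩⟩
  have hsub : ↑(B.image (fun y => ⋂ i ∈ Finset.range n, auxF α U y i)) ⊆
      coverJoin α ↑𝒰 n := by
    intro V hV
    obtain ⟨y, _, rfl⟩ := Finset.mem_image.1 (Finset.mem_coe.1 hV)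
    exact hWmem y
  have hcov : (Set.univ : Set X) ⊆
      ⋃₀ ↑(B.image (fun y => ⋂ i ∈ Finset.range n, auxF α U y i)) := by
    intro x _
    obtain ⟨y, hyB, hIeq, hdd⟩ := hB x trivial
    refine Set.mem_sUnion.2 ⟨_, Finset.mem_coe.2 (Finset.mem_image_of_mem _ hyB), ?_⟩
    refine Set.mem_iInter₂.2 fun i hi => ?_
    rw [Finset.mem_range] at hi
    by_cases hx : x ∈ α.dom (-(i : ℤ))
    · have hixI : i ∈ Iset α n x := ⟨hi, hx⟩
      have hiyI : i ∈ Iset α n y := hIeq ▸ hixI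
      rw [auxF_pos α U hiyI.2]
      refine ⟨hx, ?_, act_mem_dom α i hx⟩
      exact hball (α.act (i : ℤ) y)
        (Metric.mem_ball.2 (lt_of_le_of_lt (dist_le_dynDist α n hixI hiyI) hdd))
    · have hy : y ∉ α.dom (-(i : ℤ)) := by
        intro hyd
        have hmy : i ∈ Iset α n x := hIeq.symm ▸ (⟨hi, hyd⟩ : i ∈ Iset α n y)
        exact hx hmy.2
      rw [auxF_neg α U hy]
      apply hball y
      have h0 := lt_of_le_of_lt
        (dist_le_dynDist α n (zero_mem_Iset α hn x) (zero_mem_Iset α hn y)) hdd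
      simp only [Nat.cast_zero, α.act_zero] at h0
      exact Metric.mem_ball.2 h0
  calc coverCount α ↑𝒰 n
      ≤ (B.image (fun y => ⋂ i ∈ Finset.range n, auxF α U y i)).card :=
        Nat.sInf_le ⟨_, hsub, hcov, rfl⟩
    _ ≤ B.card := Finset.card_image_le


/-- if `𝒰` is a finite open cover of `X` with Lebesgue number `δ`, then
`N(𝒰,n,α) ≤ span(n,δ,α,X)` for all `n ≥ 1`. -/
theorem stmt5 {X : Type*} [MetricSpace X] [CompactSpace X] (α : PartialZAction X)
    (𝒰 : Finset (Set X)) (hopen : ∀ U ∈ 𝒰, IsOpen U)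
    (hcover : (Set.univ : Set X) ⊆ ⋃₀ ↑𝒰)
    (δ : ℝ) (hδ : 0 < δ)
    (hLeb : ∀ x : X, ∃ U ∈ 𝒰, Metric.ball x δ ⊆ U)
    (n : ℕ) (hn : 1 ≤ n) :
    coverCount α ↑𝒰 n ≤ spanCount dist α n δ Set.univ := by
  obtain ⟨B₀, hB₀⟩ := exists_spanning α hδ hn
  have hne : {m : ℕ | ∃ B : Finset X, ↑B ⊆ (Set.univ : Set X) ∧
      IsPSpanning dist α n δ Set.univ ↑B ∧ B.card = m}.Nonempty :=
    ⟨B₀.card, B₀, Set.subset_univ _, hB₀, rfl⟩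
  unfold spanCount
  obtain ⟨B, -, hBsp, hBcard⟩ := Nat.sInf_mem hne
  rw [← hBcard]
  exact coverCount_le_card α 𝒰 hδ hLeb hn B hBsp
end

section
/- Let (X,d) be a metric space, let α be a partial action of ℤ on X with every α_n uniformly continuous, and let Y ⊆ X be a closed subset such that Y ⊆ X_n and α_n(Y) = Y for all n ∈ ℤ. Then the restriction of α to Y is a global ℤ-action generated by the homeomorphism φ = α_1|_Y : Y → Y, and h_d(φ) ≤ ℏ_d(α), where h_d(φ) is the Bowen–Dinaburg topological entropy of φ, defined as the supremum over compact K ⊆ Y of lim_{ε→0} limsup_{n→∞} (1/n) log of the maximal cardinality of a subset of K that is ε-separated for the metric max_{0≤i<n} d(φ^i x, φ^i y). -/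
open Filter Topology Set

variable {X : Type*} [TopologicalSpace X]

/-- The Bowen–Dinaburg dynamical distance `max_{0 ≤ i < n} ρ(T^i x, T^i y)`. -/
noncomputable def bowenDyn {Z : Type*} (ρ : Z → Z → ℝ) (T : Z → Z) (n : ℕ) (x y : Z) : ℝ :=
  sSup ((fun i : ℕ => ρ (T^[i] x) (T^[i] y)) '' {i : ℕ | i < n})

/-- Maximal cardinality of an `(n,ε)`-separated (in the Bowen–Dinaburg sense) subset of `K`. -/
noncomputable def bowenSepCount {Z : Type*} (ρ : Z → Z → ℝ) (T : Z → Z) (n : ℕ) (ε : ℝ)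
    (K : Set Z) : ℕ :=
  sSup {m : ℕ | ∃ A : Finset Z, ↑A ⊆ K ∧
    (∀ x ∈ A, ∀ y ∈ A, x ≠ y → ε ≤ bowenDyn ρ T n x y) ∧ A.card = m}

/-- Bowen–Dinaburg topological entropy of `T`, restricted to compact subsets of `Y`. -/
noncomputable def bowenEntropyOn {Z : Type*} [TopologicalSpace Z] (ρ : Z → Z → ℝ) (T : Z → Z)
    (Y : Set Z) : EReal :=
  ⨆ (K : Set Z) (_ : K ⊆ Y) (_ : IsCompact K), ⨆ (ε : ℝ) (_ : 0 < ε),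
    Filter.limsup (fun n : ℕ => ((Real.log (bowenSepCount ρ T n ε K) / n : ℝ) : EReal))
      Filter.atTop

/-- Bowen–Dinaburg topological entropy of `T`:
`sup_{K compact} lim_{ε→0} limsup_n (1/n) log sep(n,ε,T,K)`. -/
noncomputable def bowenEntropy {Z : Type*} [TopologicalSpace Z] (ρ : Z → Z → ℝ)
    (T : Z → Z) : EReal :=
  bowenEntropyOn ρ T Set.univ

/-- if `Y` is closed with `Y ⊆ X_n` and `α_n(Y) = Y` for all `n`, then on `Y`
the action is the global `ℤ`-action generated by `φ = α_1|_Y`, and `h_d(φ) ≤ ℏ_d(α)`. -/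
theorem stmt9 {X : Type*} [MetricSpace X] (α : PartialZAction X)
    (hUC : ∀ (k : ℤ) (ε : ℝ), 0 < ε → ∃ δ > 0, ∀ x ∈ α.dom (-k), ∀ y ∈ α.dom (-k),
      dist x y < δ → dist (α.act k x) (α.act k y) < ε)
    (Y : Set X) (hYclosed : IsClosed Y)
    (hYdom : ∀ n : ℤ, Y ⊆ α.dom n)
    (hYinv : ∀ n : ℤ, α.act n '' Y = Y) :
    Set.MapsTo (α.act 1) Y Y ∧
      (∀ (k : ℕ), ∀ x ∈ Y, α.act (k : ℤ) x = (α.act 1)^[k] x) ∧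
      bowenEntropyOn dist (α.act 1) Y ≤ pEntropy dist α := by
  have hmaps : Set.MapsTo (α.act 1) Y Y := by
    intro x hx
    have : α.act 1 x ∈ α.act 1 '' Y := ⟨x, hx, rfl⟩
    rwa [hYinv 1] at this
  have hiter : ∀ (k : ℕ), ∀ x ∈ Y, α.act (k : ℤ) x = (α.act 1)^[k] x := by
    intro k
    induction k with
    | zero => intro x hx; simpa using α.act_zero x
    | succ k ih =>
      intro x hx
      have h1 : α.act 1 (α.act (k : ℤ) x) = α.act (1 + k) x :=
        α.act_act 1 k x (hYdom _ hx) (hYdom _ hx)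
      have : ((k : ℤ) + 1) = (1 + (k : ℤ)) := by ring
      rw [Function.iterate_succ_apply', ← ih x hx, h1]
      congr 1
  refine ⟨hmaps, hiter, ?_⟩
  -- key: for x, y ∈ Y, dynDist = bowenDyn
  have hIset : ∀ (n : ℕ), ∀ x ∈ Y, Iset α n x = {i : ℕ | i < n} := by
    intro n x hx
    ext i
    simp only [Iset, Set.mem_setOf_eq, and_iff_left_iff_imp]
    exact fun _ => hYdom _ hx
  have hdyn : ∀ (n : ℕ), ∀ x ∈ Y, ∀ y ∈ Y,
      dynDist dist α n x y = bowenDyn dist (α.act 1) n x y := by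
    intro n x hx y hy
    unfold dynDist bowenDyn
    rw [hIset n x hx, hIset n y hy, Set.inter_self]
    congr 1
    apply Set.image_congr
    intro i _
    rw [hiter i x hx, hiter i y hy]
  have hsep : ∀ (K : Set X), K ⊆ Y → ∀ (n : ℕ) (ε : ℝ),
      bowenSepCount dist (α.act 1) n ε K = sepCount dist α n ε K := by
    intro K hKY n ε
    unfold bowenSepCount sepCount
    congr 1
    ext m
    constructor
    · rintro ⟨A, hAK, hAs, hAc⟩
      refine ⟨A, hAK, ?_, hAc⟩
      intro x hxA y hyA hxy
      rw [hdyn n x (hKY (hAK hxA)) y (hKY (hAK hyA))]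
      exact hAs x hxA y hyA hxy
    · rintro ⟨A, hAK, hAs, hAc⟩
      refine ⟨A, hAK, ?_, hAc⟩
      intro x hxA y hyA hxy
      rw [← hdyn n x (hKY (hAK hxA)) y (hKY (hAK hyA))]
      exact hAs x hxA y hyA hxy
  unfold bowenEntropyOn
  refine iSup_le fun K => iSup_le fun hKY => iSup_le fun hKc => ?_
  have heq : (⨆ (ε : ℝ) (_ : 0 < ε),
      Filter.limsup (fun n : ℕ =>
        ((Real.log (bowenSepCount dist (α.act 1) n ε K) / n : ℝ) : EReal)) Filter.atTop)
      = ⨆ (ε : ℝ) (_ : 0 < ε), entSep dist α K ε := by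
    apply iSup_congr
    intro ε
    apply iSup_congr
    intro hε
    unfold entSep
    congr 1
    funext n
    rw [hsep K hKY n ε]
  rw [heq]
  exact le_iSup₂ (f := fun (K : Set X) (_ : IsCompact K) =>
    ⨆ (ε : ℝ) (_ : 0 < ε), entSep dist α K ε) K hKc
end

section
/- Let (X,d) be a metric space, let α be a partial action of ℤ on X with every α_n uniformly continuous, and suppose X = A_1 ∪ … ∪ A_k where each A_i is a closed (not necessarily disjoint) partially-invariant subset of X. Then ℏ_d(α) = max_{1≤i≤k} ℏ_d(α|_{A_i}). -/
open Filter Topology Set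

variable {X : Type*} [TopologicalSpace X]

/-!
An `(n, ε)`-separated subset of a compact `K` splits along the cover into `(n, ε)`-separated
subsets of the compact sets `K ∩ A i`, so `sep(n, ε, K) ≤ ∑ i, sep(n, ε, K ∩ A i)`, and the
exponential growth rate of a finite sum of sequences is the largest of their growth rates; this
gives `≤`. Conversely, `d_n` for `α|_{A i}` is the restriction of `d_n` for `α` and compact subsets
of `A i` are compact in `X`, which gives `≥`. Uniform continuity of the `α_i` bounds the size of
separated subsets of a compact set, so that `sep` is a genuine maximum.
-/

section PartialEntropy

variable {ρ : X → X → ℝ} {α : PartialZAction X}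

lemma dynDist_lt_of_forall_lt {n : ℕ} {ε : ℝ} (hε : 0 < ε) {x y : X}
    (h : ∀ i ∈ Iset α n x ∩ Iset α n y, ρ (α.act i x) (α.act i y) < ε) :
    dynDist ρ α n x y < ε := by
  set S := (fun i : ℕ => ρ (α.act i x) (α.act i y)) '' (Iset α n x ∩ Iset α n y)
  have hS : S.Finite := ((finite_Iio n).subset fun i hi => hi.1.1).image _
  rcases S.eq_empty_or_nonempty with hempty | hne
  · simpa [dynDist, S, hempty] using hε
  · obtain ⟨i, hi, hmax⟩ := hne.csSup_mem hS
    change sSup S < ε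
    exact hmax ▸ h i hi

lemma entSep_le_pEntropy {K : Set X} (hK : IsCompact K) {ε : ℝ} (hε : 0 < ε) :
    entSep ρ α K ε ≤ pEntropy ρ α :=
  le_iSup₂_of_le K hK (le_iSup₂_of_le ε hε le_rfl)

def PartialZAction.IsRestriction {Y : Set X} (β : PartialZAction Y) (α : PartialZAction X) :
    Prop :=
  (∀ n : ℤ, β.dom n = Subtype.val ⁻¹' α.dom n) ∧
    ∀ n : ℤ, ∀ x ∈ β.dom (-n), (β.act n x : X) = α.act n x

variable {Y : Set X} {β : PartialZAction Y}

lemma Iset_restrict (hβ : β.IsRestriction α) (n : ℕ) (x : Y) : Iset β n x = Iset α n x := by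
  ext i
  simp [Iset, hβ.1]

lemma dynDist_restrict (hβ : β.IsRestriction α) (n : ℕ) (x y : Y) :
    dynDist (fun a b : Y => ρ a b) β n x y = dynDist ρ α n x y := by
  rw [dynDist, dynDist, Iset_restrict hβ, Iset_restrict hβ]
  refine congrArg sSup (image_congr fun i hi => ?_)
  rw [hβ.2 i x (by simpa [hβ.1] using hi.1.2), hβ.2 i y (by simpa [hβ.1] using hi.2.2)]

lemma isPSeparated_map_subtype (hβ : β.IsRestriction α) (n : ℕ) (ε : ℝ) (G : Finset Y) :
    IsPSeparated ρ α n ε ↑(G.map (Function.Embedding.subtype _)) ↔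
      IsPSeparated (fun a b : Y => ρ a b) β n ε ↑G := by
  simp [IsPSeparated, dynDist_restrict hβ]

lemma sepCount_restrict (hβ : β.IsRestriction α) (n : ℕ) (ε : ℝ) (S : Set Y) :
    sepCount (fun a b : Y => ρ a b) β n ε S = sepCount ρ α n ε (Subtype.val '' S) := by
  classical
  unfold sepCount
  congr 1
  ext m
  constructor
  · rintro ⟨G, hGS, hG, rfl⟩
    exact ⟨G.map (Function.Embedding.subtype _), by simpa using hGS,
      (isPSeparated_map_subtype hβ n ε G).2 hG, G.card_map _⟩
  · rintro ⟨F, hFS, hF, rfl⟩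
    have hFY : ∀ x ∈ F, x ∈ Y := fun x hx => (hFS hx).elim fun y hy => hy.2 ▸ y.2
    rw [← Finset.subtype_map_of_mem hFY] at hFS hF ⊢
    refine ⟨F.subtype (· ∈ Y), fun y hy => ?_, (isPSeparated_map_subtype hβ n ε _).1 hF,
      (Finset.card_map _).symm⟩
    obtain ⟨z, hz, hzy⟩ := hFS (Finset.mem_map_of_mem (Function.Embedding.subtype _) hy)
    rwa [← Subtype.val_injective hzy]

lemma entSep_restrict (hβ : β.IsRestriction α) (S : Set Y) (ε : ℝ) :
    entSep (fun a b : Y => ρ a b) β S ε = entSep ρ α (Subtype.val '' S) ε := by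
  simp only [entSep, sepCount_restrict hβ]

lemma pEntropy_restrict_le (hβ : β.IsRestriction α) :
    pEntropy (fun a b : Y => ρ a b) β ≤ pEntropy ρ α :=
  iSup₂_le fun K hK => iSup₂_le fun ε hε =>
    (entSep_restrict hβ K ε).trans_le (entSep_le_pEntropy (hK.image continuous_subtype_val) hε)

lemma entSep_inter_le_pEntropy_restrict (hβ : β.IsRestriction α) {K : Set X}
    (hK : IsCompact (K ∩ Y)) {ε : ℝ} (hε : 0 < ε) :
    entSep ρ α (K ∩ Y) ε ≤ pEntropy (fun a b : Y => ρ a b) β := by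
  have hKY : Subtype.val '' (Subtype.val ⁻¹' K : Set Y) = K ∩ Y := by
    rw [image_preimage_eq_inter_range, Subtype.range_coe]
  rw [← hKY, ← entSep_restrict hβ]
  rw [← hKY, ← IsEmbedding.subtypeVal.isCompact_iff] at hK
  exact entSep_le_pEntropy hK hε

end PartialEntropy

open scoped ENNReal Uniformity
open ExpGrowth

/-- `Real.log 0 = 0` while `ENNReal.log 0 = ⊥`; passing to `max (u n) 1` reconciles the two. -/
lemma limsup_log_div_eq_expGrowthSup (u : ℕ → ℕ) :
    limsup (fun n : ℕ => ((Real.log (u n) / n : ℝ) : EReal)) atTop =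
      expGrowthSup (fun n => ((max (u n) 1 : ℕ) : ℝ≥0∞)) := by
  refine congrArg (limsup · atTop) (funext fun n => ?_)
  have hlog : Real.log (max (u n) 1 : ℕ) = Real.log (u n) := by
    rcases Nat.eq_zero_or_pos (u n) with h | h
    · simp [h]
    · rw [max_eq_left h]
  rw [EReal.coe_div, ENNReal.log_pos_real (by simp) (ENNReal.natCast_ne_top _),
    ENNReal.toReal_natCast, hlog]
  rfl

lemma limsup_log_div_le_iSup_of_le_sum {ι : Type*} [Fintype ι] [Nonempty ι] {b : ℕ → ℕ}
    {a : ι → ℕ → ℕ} (h : ∀ n, b n ≤ ∑ i, a i n) :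
    limsup (fun n : ℕ => ((Real.log (b n) / n : ℝ) : EReal)) atTop ≤
      ⨆ i, limsup (fun n : ℕ => ((Real.log (a i n) / n : ℝ) : EReal)) atTop := by
  obtain ⟨i₀⟩ := ‹Nonempty ι›
  have hle (n : ℕ) : max (b n) 1 ≤ ∑ i, max (a i n) 1 :=
    max_le ((h n).trans (Finset.sum_le_sum fun i _ => le_max_left _ _))
      ((le_max_right (a i₀ n) 1).trans
        (Finset.single_le_sum (fun i _ => Nat.zero_le (max (a i n) 1)) (Finset.mem_univ i₀)))
  simp only [limsup_log_div_eq_expGrowthSup]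
  calc _ ≤ expGrowthSup (∑ i, fun n => ((max (a i n) 1 : ℕ) : ℝ≥0∞)) :=
        expGrowthSup_monotone fun n => by simpa only [Finset.sum_apply] using mod_cast hle n
    _ = _ := by simp [expGrowthSup_sum]

section Metric

variable {M : Type*} [PseudoMetricSpace M] {α : PartialZAction M}

lemma eventually_uniformity_dynDist_lt
    (hUC : ∀ i : ℕ, UniformContinuousOn (α.act i) (α.dom (-i))) (n : ℕ) {ε : ℝ} (hε : 0 < ε) :
    ∀ᶠ p : M × M in 𝓤 M, dynDist dist α n p.1 p.2 < ε := by
  have hiter : ∀ᶠ p : M × M in 𝓤 M, ∀ i ∈ Iio n,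
      p ∈ α.dom (-i) ×ˢ α.dom (-i) → dist (α.act i p.1) (α.act i p.2) < ε :=
    (eventually_all_finite (finite_Iio n)).2 fun i _ =>
      eventually_inf_principal.1 ((hUC i).eventually (Metric.dist_mem_uniformity hε))
  exact hiter.mono fun p hp => dynDist_lt_of_forall_lt hε fun i hi => hp i hi.1.1 ⟨hi.1.2, hi.2.2⟩

/-- Without this bound `sepCount`, an `sSup` in `ℕ`, would be the junk value `0`. -/
lemma bddAbove_card_isPSeparated (hUC : ∀ i : ℕ, UniformContinuousOn (α.act i) (α.dom (-i)))
    {K : Set M} (hK : IsCompact K) (n : ℕ) {ε : ℝ} (hε : 0 < ε) :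
    BddAbove {m : ℕ | ∃ F : Finset M, ↑F ⊆ K ∧ IsPSeparated dist α n ε ↑F ∧ F.card = m} := by
  obtain ⟨δ, hδ, hsmall⟩ :=
    Metric.mem_uniformity_dist.1 (eventually_uniformity_dynDist_lt hUC n hε)
  obtain ⟨T, hT⟩ := hK.elim_finite_subcover (fun x => Metric.ball x (δ / 2))
    (fun _ => Metric.isOpen_ball) fun x _ => mem_iUnion.2 ⟨x, Metric.mem_ball_self (half_pos hδ)⟩
  refine ⟨T.card, ?_⟩
  rintro _ ⟨F, hFK, hF, rfl⟩
  choose! c hcT hc using fun x (hx : x ∈ F) => mem_iUnion₂.1 (hT (hFK hx))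
  refine Finset.card_le_card_of_injOn c hcT fun x hx y hy hxy =>
    by_contra fun hne => (hF x hx y hy hne).not_gt (hsmall ?_)
  calc dist x y ≤ dist x (c x) + dist (c x) y := dist_triangle _ _ _
    _ < δ / 2 + δ / 2 := by
      refine add_lt_add (Metric.mem_ball.1 (hc x hx)) ?_
      rw [hxy, dist_comm]
      exact Metric.mem_ball.1 (hc y hy)
    _ = δ := add_halves δ

lemma card_le_sepCount (hUC : ∀ i : ℕ, UniformContinuousOn (α.act i) (α.dom (-i)))
    {K : Set M} (hK : IsCompact K) {n : ℕ} {ε : ℝ} (hε : 0 < ε) {F : Finset M} (hFK : ↑F ⊆ K)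
    (hF : IsPSeparated dist α n ε ↑F) : F.card ≤ sepCount dist α n ε K :=
  le_csSup (bddAbove_card_isPSeparated hUC hK n hε) ⟨F, hFK, hF, rfl⟩

lemma sepCount_le_sum_sepCount_inter {ι : Type*} [Fintype ι]
    (hUC : ∀ i : ℕ, UniformContinuousOn (α.act i) (α.dom (-i))) {A : ι → Set M} {K : Set M}
    (hKA : ∀ i, IsCompact (K ∩ A i)) (hcover : K ⊆ ⋃ i, A i) {ε : ℝ} (hε : 0 < ε) (n : ℕ) :
    sepCount dist α n ε K ≤ ∑ i, sepCount dist α n ε (K ∩ A i) := by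
  classical
  refine csSup_le' ?_
  rintro _ ⟨F, hFK, hF, rfl⟩
  have hF_sub : F ⊆ Finset.univ.biUnion fun i => F.filter (· ∈ A i) := fun x hx =>
    Finset.mem_biUnion.2 <| (mem_iUnion.1 (hcover (hFK hx))).imp fun i hi =>
      ⟨Finset.mem_univ i, Finset.mem_filter.2 ⟨hx, hi⟩⟩
  calc F.card ≤ ∑ i, (F.filter (· ∈ A i)).card :=
        (Finset.card_le_card hF_sub).trans Finset.card_biUnion_le
    _ ≤ ∑ i, sepCount dist α n ε (K ∩ A i) := Finset.sum_le_sum fun i _ =>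
        card_le_sepCount hUC (hKA i) hε
          (fun x hx => ⟨hFK (Finset.mem_filter.1 hx).1, (Finset.mem_filter.1 hx).2⟩)
          fun x hx y hy => hF x (Finset.filter_subset _ F hx) y (Finset.filter_subset _ F hy)

lemma entSep_le_iSup_entSep_inter {ι : Type*} [Fintype ι] [Nonempty ι]
    (hUC : ∀ i : ℕ, UniformContinuousOn (α.act i) (α.dom (-i))) {A : ι → Set M} {K : Set M}
    (hKA : ∀ i, IsCompact (K ∩ A i)) (hcover : K ⊆ ⋃ i, A i) {ε : ℝ} (hε : 0 < ε) :
    entSep dist α K ε ≤ ⨆ i, entSep dist α (K ∩ A i) ε :=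
  limsup_log_div_le_iSup_of_le_sum (sepCount_le_sum_sepCount_inter hUC hKA hcover hε)

end Metric

theorem stmt10_general {X : Type*} [MetricSpace X] (α : PartialZAction X)
    (hUC : ∀ (k : ℤ) (ε : ℝ), 0 < ε → ∃ δ > 0, ∀ x ∈ α.dom (-k), ∀ y ∈ α.dom (-k),
      dist x y < δ → dist (α.act k x) (α.act k y) < ε)
    (k : ℕ) (hk : 0 < k) (A : Fin k → Set X)
    (hclosed : ∀ i, IsClosed (A i))
    (hcover : (⋃ i, A i) = Set.univ)
    (β : (i : Fin k) → PartialZAction (A i))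
    (hβdom : ∀ (i : Fin k) (n : ℤ), (β i).dom n = Subtype.val ⁻¹' α.dom n)
    (hβact : ∀ (i : Fin k) (n : ℤ), ∀ x ∈ (β i).dom (-n), ((β i).act n x : X) = α.act n ↑x) :
    pEntropy dist α =
      ⨆ i : Fin k, pEntropy (fun x y : A i => dist (x : X) (y : X)) (β i) := by
  have hUC' (i : ℕ) : UniformContinuousOn (α.act i) (α.dom (-i)) :=
    Metric.uniformContinuousOn_iff.2 (hUC i)
  have hβ (i : Fin k) : (β i).IsRestriction α := ⟨hβdom i, hβact i⟩
  have : Nonempty (Fin k) := ⟨⟨0, hk⟩⟩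
  refine le_antisymm (iSup₂_le fun K hK => iSup₂_le fun ε hε => ?_)
    (iSup_le fun i => pEntropy_restrict_le (hβ i))
  have hKA (i : Fin k) : IsCompact (K ∩ A i) := hK.inter_right (hclosed i)
  calc entSep dist α K ε ≤ ⨆ i, entSep dist α (K ∩ A i) ε :=
        entSep_le_iSup_entSep_inter hUC' hKA (hcover ▸ subset_univ K) hε
    _ ≤ _ := iSup_mono fun i => entSep_inter_le_pEntropy_restrict (hβ i) (hKA i) hε

/-- if `X = A_1 ∪ ⋯ ∪ A_k` with each `A_i` closed and partially-invariant,
then `ℏ_d(α) = max_i ℏ_d(α|_{A_i})`.  The restricted partial action `α|_{A_i}` is encoded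
as a partial action `β i` on the subspace `A i` with domains `A i ∩ X_n` and maps the
restrictions of the `α_n`. -/
theorem stmt10 {X : Type*} [MetricSpace X] (α : PartialZAction X)
    (hUC : ∀ (k : ℤ) (ε : ℝ), 0 < ε → ∃ δ > 0, ∀ x ∈ α.dom (-k), ∀ y ∈ α.dom (-k),
      dist x y < δ → dist (α.act k x) (α.act k y) < ε)
    (k : ℕ) (hk : 0 < k) (A : Fin k → Set X)
    (hclosed : ∀ i, IsClosed (A i))
    (hinv : ∀ (i : Fin k) (n : ℤ), α.act n '' (A i ∩ α.dom (-n)) ⊆ A i ∩ α.dom n)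
    (hcover : (⋃ i, A i) = Set.univ)
    (β : (i : Fin k) → PartialZAction (A i))
    (hβdom : ∀ (i : Fin k) (n : ℤ), (β i).dom n = Subtype.val ⁻¹' α.dom n)
    (hβact : ∀ (i : Fin k) (n : ℤ), ∀ x ∈ (β i).dom (-n), ((β i).act n x : X) = α.act n ↑x) :
    pEntropy dist α =
      ⨆ i : Fin k, pEntropy (fun x y : A i => dist (x : X) (y : X)) (β i) :=
  stmt10_general α hUC k hk A hclosed hcover β hβdom hβact
end

section
/- Let (Z,d^e) be a metric space and T : Z → Z a homeomorphism such that T^n is uniformly continuous for each n ∈ ℤ. Let X ⊆ Z be an open subset with a metric d that is uniformly equivalent to the restriction of d^e to X, and let α be the restriction of the global action generated by T to X, i.e. the partial action with X_n = X ∩ T^n(X) and α_n = T^n|_{X_{-n}} for n ≠ 0, X_0 = X and α_0 = id. Then ℏ_d(α) ≤ h_{d^e}(T), where h_{d^e}(T) is the Bowen–Dinaburg topological entropy of T, defined as the supremum over compact K ⊆ Z of lim_{ε→0} limsup_{n→∞} (1/n) log of the maximal cardinality of a subset of K that is ε-separated for the metric max_{0≤i<n} d^e(T^i x, T^i y). 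-/
open Filter Topology Set

variable {X : Type*} [TopologicalSpace X]

private lemma zpow_apply_eq_iterate' {Z : Type*} [TopologicalSpace Z] (T : Z ≃ₜ Z) (i : ℕ)
    (z : Z) : (T.toEquiv ^ (i : ℤ)) z = T^[i] z := by
  rw [zpow_natCast]
  induction i generalizing z with
  | zero => simp
  | succ n ih =>
    rw [pow_succ, Equiv.Perm.mul_apply, Function.iterate_succ_apply]
    exact ih (T z)

private lemma unif_aux {Z : Type*} [MetricSpace Z] (T : Z ≃ₜ Z)
    (hTuc : ∀ (n : ℤ) (ε : ℝ), 0 < ε → ∃ δ > 0, ∀ x y : Z,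
      dist x y < δ → dist ((T.toEquiv ^ n) x) ((T.toEquiv ^ n) y) < ε)
    (n : ℕ) (c : ℝ) (hc : 0 < c) :
    ∃ δ > 0, ∀ x y : Z, dist x y < δ → ∀ i < n, dist (T^[i] x) (T^[i] y) < c := by
  induction n with
  | zero => exact ⟨1, one_pos, fun x y _ i hi => absurd hi (Nat.not_lt_zero i)⟩
  | succ m ih =>
    obtain ⟨δ₁, hδ₁, h₁⟩ := ih
    obtain ⟨δ₂, hδ₂, h₂⟩ := hTuc (m : ℤ) c hc
    refine ⟨min δ₁ δ₂, lt_min hδ₁ hδ₂, fun x y hxy i hi => ?_⟩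
    rcases Nat.lt_succ_iff_lt_or_eq.mp hi with hi | rfl
    · exact h₁ x y (hxy.trans_le (min_le_left _ _)) i hi
    · have := h₂ x y (hxy.trans_le (min_le_right _ _))
      rwa [zpow_apply_eq_iterate' T, zpow_apply_eq_iterate' T] at this

private lemma sep_card_bound {Z : Type*} [MetricSpace Z] {K : Set Z} (hK : IsCompact K)
    {r : ℝ} (hr : 0 < r) :
    ∃ N : ℕ, ∀ A : Finset Z, ↑A ⊆ K → (∀ x ∈ A, ∀ y ∈ A, x ≠ y → r ≤ dist x y) →
      A.card ≤ N := by
  obtain ⟨t, htf, htK⟩ := (Metric.totallyBounded_iff.mp hK.totallyBounded) (r / 2) (by positivity)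
  refine ⟨htf.toFinset.card, fun A hA hsep => ?_⟩
  have hball : ∀ a : Z, ∃ c, a ∈ A → c ∈ htf.toFinset ∧ a ∈ Metric.ball c (r / 2) := by
    intro a
    by_cases ha : a ∈ A
    · obtain ⟨c, hc, hac⟩ := Set.mem_iUnion₂.mp (htK (hA ha))
      exact ⟨c, fun _ => ⟨htf.mem_toFinset.mpr hc, hac⟩⟩
    · exact ⟨a, fun h => absurd h ha⟩
  choose f hf using hball
  apply Finset.card_le_card_of_injOn f
  · intro a ha
    exact (hf a ha).1
  · intro a ha b hb hab
    simp only [Finset.mem_coe] at ha hb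
    by_contra hne
    have h1 := (hf a ha).2
    have h2 := (hf b hb).2
    rw [hab] at h1
    have hlt : dist a b < r := by
      have t1 := Metric.mem_ball.mp h1
      have t2 := Metric.mem_ball.mp h2
      have t3 := dist_triangle a (f b) b
      rw [dist_comm a (f b)] at t1
      calc dist a b ≤ dist a (f b) + dist (f b) b := t3
        _ < r := by rw [dist_comm a (f b), dist_comm (f b) b]; linarith
    exact absurd (hsep a ha b hb hne) (not_le.mpr hlt)

private lemma log_nat_mono {a b : ℕ} (h : a ≤ b) : Real.log a ≤ Real.log b := by
  rcases Nat.eq_zero_or_pos a with rfl | ha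
  · simpa using Real.log_natCast_nonneg b
  · exact Real.log_le_log (by exact_mod_cast ha) (by exact_mod_cast h)

/-- the partial entropy of the restriction to an open subset `X` of a global
action generated by a homeomorphism `T` (with all powers uniformly continuous), computed
with respect to a metric `ρ` on `X` uniformly equivalent to the ambient one, is at most
the Bowen–Dinaburg topological entropy of `T`. -/
theorem stmt13 {Z : Type*} [MetricSpace Z] (T : Z ≃ₜ Z)
    (hTuc : ∀ (n : ℤ) (ε : ℝ), 0 < ε → ∃ δ > 0, ∀ x y : Z,
      dist x y < δ → dist ((T.toEquiv ^ n) x) ((T.toEquiv ^ n) y) < ε)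
    (X : Set Z) (hX : IsOpen X)
    (ρ : X → X → ℝ)
    (hρ_nonneg : ∀ x y : X, 0 ≤ ρ x y)
    (hρ_symm : ∀ x y : X, ρ x y = ρ y x)
    (hρ_triangle : ∀ x y z : X, ρ x z ≤ ρ x y + ρ y z)
    (hρ_eq_zero : ∀ x y : X, ρ x y = 0 ↔ x = y)
    (hequiv₁ : ∀ ε : ℝ, 0 < ε → ∃ δ > 0, ∀ x y : X, dist (x : Z) (y : Z) < δ → ρ x y < ε)
    (hequiv₂ : ∀ ε : ℝ, 0 < ε → ∃ δ > 0, ∀ x y : X, ρ x y < δ → dist (x : Z) (y : Z) < ε)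
    (α : PartialZAction X)
    (hdom : ∀ n : ℤ, α.dom n = Subtype.val ⁻¹' (⇑(T.toEquiv ^ n) '' X))
    (hact : ∀ (n : ℤ), ∀ x ∈ α.dom (-n), ((α.act n x : Z)) = (T.toEquiv ^ n) ↑x) :
    pEntropy ρ α ≤ bowenEntropy dist ⇑T := by
  classical
  refine iSup_le fun K => iSup_le fun hK => iSup_le fun ε => iSup_le fun hε => ?_
  obtain ⟨δ, hδ, hδ_imp⟩ := hequiv₁ ε hε
  set K' : Set Z := Subtype.val '' K with hK'def
  have hK' : IsCompact K' := hK.image continuous_subtype_val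
  have key : ∀ n : ℕ, sepCount ρ α n ε K ≤ bowenSepCount dist ⇑T n δ K' := by
    intro n
    obtain ⟨δ₂, hδ₂, hδ₂imp⟩ := unif_aux T hTuc n (δ / 2) (by positivity)
    obtain ⟨N, hN⟩ := sep_card_bound hK' hδ₂
    have hbdd : BddAbove {m : ℕ | ∃ A : Finset Z, ↑A ⊆ K' ∧
        (∀ x ∈ A, ∀ y ∈ A, x ≠ y → δ ≤ bowenDyn dist ⇑T n x y) ∧ A.card = m} := by
      refine ⟨N, ?_⟩
      rintro m ⟨A, hAK, hAsep, rfl⟩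
      apply hN A hAK
      intro x hx y hy hxy
      by_contra h
      push_neg at h
      have hle : bowenDyn dist ⇑T n x y ≤ δ / 2 := by
        apply Real.sSup_le
        · rintro v ⟨i, hi, rfl⟩
          exact (hδ₂imp x y h i hi).le
        · positivity
      have := hAsep x hx y hy hxy
      linarith
    apply csSup_le'
    rintro m ⟨A, hAK, hAsep, hcard⟩
    apply le_csSup hbdd
    refine ⟨A.image Subtype.val, ?_, ?_, by
      rw [Finset.card_image_of_injective _ Subtype.val_injective, hcard]⟩
    · intro z hz
      simp only [Finset.coe_image] at hz
      obtain ⟨x, hx, rfl⟩ := hz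
      exact ⟨x, hAK hx, rfl⟩
    · intro x' hx' y' hy' hne
      simp only [Finset.mem_image] at hx' hy'
      obtain ⟨x, hx, rfl⟩ := hx'
      obtain ⟨y, hy, rfl⟩ := hy'
      have hxy : x ≠ y := fun h => hne (by rw [h])
      have hsep := hAsep x hx y hy hxy
      rw [dynDist] at hsep
      have hSfin : ((fun i : ℕ => ρ (α.act i x) (α.act i y)) ''
          (Iset α n x ∩ Iset α n y)).Finite :=
        Set.Finite.image _ (((Set.finite_Iio n).subset (fun i hi => hi.1.1)))
      have hne' : ((fun i : ℕ => ρ (α.act i x) (α.act i y)) ''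
          (Iset α n x ∩ Iset α n y)).Nonempty := by
        by_contra h
        rw [Set.not_nonempty_iff_eq_empty] at h
        rw [h, Real.sSup_empty] at hsep
        linarith
      obtain ⟨i, hiS, hival⟩ := Set.Nonempty.csSup_mem hne' hSfin
      have hρi : ε ≤ ρ (α.act i x) (α.act i y) := by
        rw [show ρ (α.act i x) (α.act i y) =
          (fun i : ℕ => ρ (α.act i x) (α.act i y)) i from rfl, hival]
        exact hsep
      have hdist : δ ≤ dist ((α.act i x : X) : Z) ((α.act i y : X) : Z) := by
        by_contra h
        push_neg at h
        exact absurd (hδ_imp _ _ h) (not_lt.mpr hρi)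
      have hix : x ∈ α.dom (-(i : ℤ)) := hiS.1.2
      have hiy : y ∈ α.dom (-(i : ℤ)) := hiS.2.2
      have h1 : ((α.act i x : X) : Z) = T^[i] ↑x := by
        rw [hact i x hix, zpow_apply_eq_iterate' T]
      have h2 : ((α.act i y : X) : Z) = T^[i] ↑y := by
        rw [hact i y hiy, zpow_apply_eq_iterate' T]
      have hlt : i < n := hiS.1.1
      calc δ ≤ dist (T^[i] (x : Z)) (T^[i] (y : Z)) := by rw [← h1, ← h2]; exact hdist
        _ ≤ bowenDyn dist ⇑T n ↑x ↑y :=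
          le_csSup (((Set.finite_Iio n).image _).bddAbove) ⟨i, hlt, rfl⟩
  have hmono : ∀ n : ℕ, ((Real.log (sepCount ρ α n ε K) / n : ℝ) : EReal) ≤
      ((Real.log (bowenSepCount dist ⇑T n δ K') / n : ℝ) : EReal) := by
    intro n
    apply EReal.coe_le_coe_iff.mpr
    rcases Nat.eq_zero_or_pos n with rfl | hn
    · simp
    · exact (div_le_div_iff_of_pos_right (by exact_mod_cast hn)).mpr (log_nat_mono (key n))
  have hent : entSep ρ α K ε ≤ Filter.limsup (fun n : ℕ =>
      ((Real.log (bowenSepCount dist ⇑T n δ K') / n : ℝ) : EReal)) Filter.atTop :=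
    Filter.limsup_le_limsup (Filter.Eventually.of_forall hmono)
  refine hent.trans ?_
  rw [bowenEntropy, bowenEntropyOn]
  refine le_iSup_of_le K' ?_
  refine le_iSup_of_le (Set.subset_univ K') ?_
  refine le_iSup_of_le hK' ?_
  refine le_iSup_of_le δ ?_
  exact le_iSup_of_le hδ le_rfl
end

section
/- Let α be a partial action of ℤ on a topological space X. Then the set Ω(α) of partially non-wandering points is α-invariant: if x ∈ Ω(α) and i ∈ ℤ is such that x ∈ X_{-i}, then α_i(x) ∈ Ω(α). -/
open Filter Topology Set

variable {X : Type*} [TopologicalSpace X]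

/-- The set `Ω(α)` of partially non-wandering points: points `x` for which there is a
sequence of natural numbers `n_i → ∞` with `x ∈ X_{-n_i}` for all `i` and
`α_{n_i}(x) → x`. -/
def pNonWandering (α : PartialZAction X) : Set X :=
  {x | ∃ u : ℕ → ℕ, Filter.Tendsto u Filter.atTop Filter.atTop ∧
    (∀ i : ℕ, x ∈ α.dom (-(u i : ℤ))) ∧
    Filter.Tendsto (fun i : ℕ => α.act (u i : ℤ) x) Filter.atTop (nhds x)}

/-! If `α_{n_k}(x) → x` and `x ∈ X_{-i}`, openness of `X_{-i}` puts `α_{n_k}(x)` in `X_{-i}` for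
large `k`. The partial action axioms then make `α_{n_k}` and `α_i` commute at `x`, so
`α_{n_k}(α_i x) = α_i(α_{n_k} x) → α_i x` by continuity of `α_i` on `X_{-i}`. -/

namespace PartialZAction

variable (α : PartialZAction X) {x : X} {m n : ℤ}

lemma act_mem_dom_add (hx : x ∈ α.dom (-n)) (hm : x ∈ α.dom m) :
    α.act n x ∈ α.dom (n + m) :=
  (α.image_inter n m ▸ mem_image_of_mem (α.act n) ⟨hx, hm⟩ : _ ∈ α.dom n ∩ _).2

lemma act_mem_dom (hx : x ∈ α.dom (-n)) : α.act n x ∈ α.dom n := by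
  simpa using α.act_mem_dom_add (m := 0) hx (by simp [α.dom_zero])

lemma act_neg_act (hx : x ∈ α.dom (-n)) : α.act (-n) (α.act n x) = x := by
  simpa [α.act_zero] using α.act_act (-n) n x hx (by simp [α.dom_zero])

lemma mem_dom_sub_of_act_mem (hx : x ∈ α.dom (-m)) (h : α.act m x ∈ α.dom (-n)) :
    x ∈ α.dom (-m - n) := by
  have := α.act_mem_dom_add (n := -m) (by simpa using α.act_mem_dom hx) h
  rwa [α.act_neg_act hx, ← sub_eq_add_neg] at this

lemma act_mem_dom_of_mem_dom_sub (hn : x ∈ α.dom (-n)) (h : x ∈ α.dom (-m - n)) :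
    α.act n x ∈ α.dom (-m) := by
  convert α.act_mem_dom_add hn (neg_sub_comm m n ▸ h) using 2
  ring

lemma act_comm (hm : x ∈ α.dom (-m)) (hn : x ∈ α.dom (-n)) (hmn : x ∈ α.dom (-m - n)) :
    α.act m (α.act n x) = α.act n (α.act m x) := by
  rw [α.act_act m n x hn (neg_sub_comm m n ▸ hmn), α.act_act n m x hm hmn, add_comm]

end PartialZAction

lemma mem_pNonWandering_of_eventually {α : PartialZAction X} {y : X} {u : ℕ → ℕ}
    (hu : Tendsto u atTop atTop) (hdom : ∀ᶠ j in atTop, y ∈ α.dom (-(u j : ℤ)))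
    (hconv : Tendsto (fun j => α.act (u j : ℤ) y) atTop (𝓝 y)) :
    y ∈ pNonWandering α := by
  obtain ⟨N, hN⟩ := eventually_atTop.mp hdom
  exact ⟨fun j => u (j + N), hu.comp (tendsto_add_atTop_nat N),
    fun j => hN _ (Nat.le_add_left N j), hconv.comp (tendsto_add_atTop_nat N)⟩

/-- the partially non-wandering set is `α`-invariant. -/
theorem stmt15 {X : Type*} [TopologicalSpace X] (α : PartialZAction X)
    (x : X) (hx : x ∈ pNonWandering α) (i : ℤ) (hxi : x ∈ α.dom (-i)) :
    α.act i x ∈ pNonWandering α := by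
  obtain ⟨u, hu, hdom, hconv⟩ := hx
  have hxi_nhds : α.dom (-i) ∈ 𝓝 x := (α.isOpen_dom (-i)).mem_nhds hxi
  have hdom_sub : ∀ᶠ j in atTop, x ∈ α.dom (-(u j : ℤ) - i) := by
    filter_upwards [hconv.eventually hxi_nhds] with j hj
    exact α.mem_dom_sub_of_act_mem (hdom j) hj
  refine mem_pNonWandering_of_eventually hu ?_ ?_
  · filter_upwards [hdom_sub] with j hj
    exact α.act_mem_dom_of_mem_dom_sub hxi hj
  · refine (((α.continuousOn i).continuousAt hxi_nhds).tendsto.comp hconv).congr' ?_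
    filter_upwards [hdom_sub] with j hj
    exact (α.act_comm (hdom j) hxi hj).symm
end

section
/- Let (X,d) be a metric space, A ⊆ X an open subset, and f : A → f(A) ⊆ X a homeomorphism onto an open subset, such that the induced partial action α of ℤ on X given by X_0 = X, α_0 = id_X, X_n = A ∩ f^n(A) and α_n = f^n : X_{-n} → X_n for n ≠ 0 has all maps uniformly continuous. If there exists N ∈ ℕ such that X_n = ∅ for all n ∈ ℤ with |n| ≥ N, then ℏ_d(α) = 0. -/
open Filter Topology Set

variable {X : Type*} [TopologicalSpace X]

/-- for the partial action induced by a homeomorphism `f : A → f(A)` between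
open subsets of `X` (so that `X_n = A ∩ f^n(A)` and `α_n = f^n`), if all the domains
`X_n` with `|n| ≥ N` are empty for some `N`, then the entropy of `f`, i.e. the partial
topological entropy of the induced partial action, vanishes. -/
theorem stmt17 {X : Type*} [MetricSpace X] (A : Set X) (hA : IsOpen A)
    (f : X → X) (hfA : IsOpen (f '' A)) (hinj : Set.InjOn f A)
    (hfc : ContinuousOn f A)
    (hfinv : ∃ g : X → X, (∀ x ∈ A, g (f x) = x) ∧ ContinuousOn g (f '' A))
    (α : PartialZAction X)
    (hUC : ∀ (k : ℤ) (ε : ℝ), 0 < ε → ∃ δ > 0, ∀ x ∈ α.dom (-k), ∀ y ∈ α.dom (-k),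
      dist x y < δ → dist (α.act k x) (α.act k y) < ε)
    (hdom_neg : ∀ n : ℕ, 0 < n →
      α.dom (-(n : ℤ)) = {x : X | ∀ i : ℕ, i ≤ n → f^[i] x ∈ A})
    (hdom_pos : ∀ n : ℕ, 0 < n →
      α.dom (n : ℤ) = f^[n] '' {x : X | ∀ i : ℕ, i ≤ n → f^[i] x ∈ A})
    (hact_pos : ∀ n : ℕ, ∀ x ∈ α.dom (-(n : ℤ)), α.act (n : ℤ) x = f^[n] x)
    (hact_neg : ∀ n : ℕ, ∀ x ∈ α.dom (n : ℤ), f^[n] (α.act (-(n : ℤ)) x) = x)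
    (hN : ∃ N : ℕ, ∀ n : ℤ, (N : ℤ) ≤ |n| → α.dom n = ∅) :
    pEntropy dist α = 0 := by
  obtain ⟨N, hN⟩ := hN
  set M := N + 1 with hM
  have hdomM : ∀ i : ℕ, M ≤ i → α.dom (-(i : ℤ)) = ∅ := by
    intro i hi
    apply hN
    rw [abs_neg, abs_of_nonneg (by positivity : (0:ℤ) ≤ (i:ℤ))]
    exact_mod_cast le_trans (Nat.le_succ N) hi
  have hIset : ∀ n : ℕ, M ≤ n → ∀ x, Iset α n x = Iset α M x := by
    intro n hn x
    ext i
    simp only [Iset, Set.mem_setOf_eq]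
    constructor
    · rintro ⟨hi, hx⟩
      refine ⟨?_, hx⟩
      by_contra h
      push_neg at h
      rw [hdomM i h] at hx
      exact hx
    · rintro ⟨hi, hx⟩
      exact ⟨lt_of_lt_of_le hi hn, hx⟩
  have hdyn : ∀ n : ℕ, M ≤ n → ∀ x y, dynDist dist α n x y = dynDist dist α M x y := by
    intro n hn x y
    unfold dynDist
    rw [hIset n hn x, hIset n hn y]
  have hsep : ∀ n, M ≤ n → ∀ ε (K : Set X),
      sepCount dist α n ε K = sepCount dist α M ε K := by
    intro n hn ε K
    unfold sepCount
    congr 1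
    ext m
    constructor <;> rintro ⟨B, hBK, hsepB, hc⟩ <;> refine ⟨B, hBK, ?_, hc⟩ <;>
      intro x hx y hy hxy
    · rw [← hdyn n hn]
      exact hsepB x hx y hy hxy
    · rw [hdyn n hn]
      exact hsepB x hx y hy hxy
  have hent : ∀ (K : Set X) (ε : ℝ), entSep dist α K ε = 0 := by
    intro K ε
    unfold entSep
    have h1 : Tendsto
        (fun n : ℕ => ((Real.log (sepCount dist α M ε K) / n : ℝ) : EReal)) atTop (𝓝 0) := by
      have h0 := tendsto_const_div_atTop_nhds_zero_nat (Real.log (sepCount dist α M ε K))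
      have := EReal.tendsto_coe.mpr h0
      simpa using this
    have htend : Tendsto
        (fun n : ℕ => ((Real.log (sepCount dist α n ε K) / n : ℝ) : EReal)) atTop (𝓝 0) := by
      refine h1.congr' ?_
      filter_upwards [eventually_ge_atTop M] with n hn
      rw [hsep n hn]
    exact htend.limsup_eq
  unfold pEntropy
  apply le_antisymm
  · exact iSup₂_le fun K _ => iSup₂_le fun ε _ => le_of_eq (hent K ε)
  · calc (0 : EReal) = entSep dist α ∅ 1 := (hent ∅ 1).symm
      _ ≤ _ := by
        refine le_iSup₂_of_le ∅ isCompact_empty ?_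
        exact le_iSup₂_of_le 1 one_pos le_rfl
end
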